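/- arXiv:1907.01888 — 4 statements merged into one kernel-verified Lean document; each statement's English description precedes it below -/
import Mathlib

section
/- If f : ℝ → ℝ is continuous with F(u) = ∫₀ᵘ f(s) ds, and there exists μ > 2 such that (1/μ) f(u)u ≥ F(u) > 0 for all u ≠ 0, then there exist constants c₁, c₂ > 0 such that F(t) ≥ c₁|t|^μ − c₂|t|² for all t ∈ ℝ. -/
/-!
The Ambrosetti–Rabinowitz inequality `μ F(u) ≤ F'(u) u` says exactly that `F(t) t^{-μ}` is
nondecreasing for `t > 0`, so `F(t) ≥ F(1) t^μ` for `t ≥ 1`; reflecting `t ↦ -t` gives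
`F(t) ≥ F(-1) |t|^μ` for `t ≤ -1`. For `|t| ≤ 1` and `μ ≥ 2` we have `|t|^μ ≤ |t|^2`, so the
right-hand side `c (|t|^μ - |t|^2)` is nonpositive there while `F ≥ 0`.
-/

open Set

section AmbrosettiRabinowitz

variable {F F' : ℝ → ℝ} {μ : ℝ}

theorem monotoneOn_mul_rpow_neg_of_mul_le_deriv_mul
    (hF : ∀ x, 0 < x → HasDerivAt F (F' x) x) (hAR : ∀ x, 0 < x → μ * F x ≤ F' x * x) :
    MonotoneOn (fun t => F t * t ^ (-μ)) (Ioi 0) := by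
  have hderiv : ∀ x, 0 < x →
      HasDerivAt (fun t => F t * t ^ (-μ)) (F' x * x ^ (-μ) + F x * (-μ * x ^ (-μ - 1))) x :=
    fun x hx => (hF x hx).mul (Real.hasDerivAt_rpow_const (Or.inl hx.ne'))
  refine monotoneOn_of_hasDerivWithinAt_nonneg (convex_Ioi 0)
    (fun x hx => (hderiv x hx).continuousAt.continuousWithinAt)
    (fun x hx => (hderiv x (interior_Ioi.subset hx)).hasDerivWithinAt) fun x hx => ?_
  rw [interior_Ioi] at hx
  have hsplit : x ^ (-μ) = x * x ^ (-μ - 1) := by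
    conv_lhs => rw [show -μ = 1 + (-μ - 1) by ring]
    rw [Real.rpow_add hx, Real.rpow_one]
  have hpow : 0 ≤ x ^ (-μ - 1) := Real.rpow_nonneg hx.le _
  calc (0 : ℝ) ≤ (F' x * x - μ * F x) * x ^ (-μ - 1) :=
        mul_nonneg (sub_nonneg.2 (hAR x hx)) hpow
    _ = F' x * x ^ (-μ) + F x * (-μ * x ^ (-μ - 1)) := by rw [hsplit]; ring

theorem mul_rpow_le_of_mul_le_deriv_mul
    (hF : ∀ x, 0 < x → HasDerivAt F (F' x) x) (hAR : ∀ x, 0 < x → μ * F x ≤ F' x * x)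
    {t : ℝ} (ht : 1 ≤ t) : F 1 * t ^ μ ≤ F t := by
  have ht0 : 0 < t := one_pos.trans_le ht
  have hmono : F 1 * 1 ^ (-μ) ≤ F t * t ^ (-μ) :=
    monotoneOn_mul_rpow_neg_of_mul_le_deriv_mul hF hAR (mem_Ioi.2 one_pos) ht0 ht
  rw [Real.one_rpow, mul_one] at hmono
  calc F 1 * t ^ μ ≤ F t * t ^ (-μ) * t ^ μ :=
        mul_le_mul_of_nonneg_right hmono (Real.rpow_nonneg ht0.le _)
    _ = F t := by rw [mul_assoc, ← Real.rpow_add ht0, neg_add_cancel, Real.rpow_zero, mul_one]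

theorem min_mul_abs_rpow_le_of_mul_le_deriv_mul
    (hF : ∀ x, HasDerivAt F (F' x) x) (hAR : ∀ x, x ≠ 0 → μ * F x ≤ F' x * x)
    {t : ℝ} (ht : 1 ≤ |t|) : min (F 1) (F (-1)) * |t| ^ μ ≤ F t := by
  have hpow : 0 ≤ |t| ^ μ := Real.rpow_nonneg (abs_nonneg t) _
  rcases le_total 0 t with h0 | h0
  · rw [abs_of_nonneg h0] at ht hpow ⊢
    calc min (F 1) (F (-1)) * t ^ μ ≤ F 1 * t ^ μ :=
          mul_le_mul_of_nonneg_right (min_le_left _ _) hpow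
      _ ≤ F t := mul_rpow_le_of_mul_le_deriv_mul (fun x _ => hF x)
          (fun x hx => hAR x hx.ne') ht
  · rw [abs_of_nonpos h0] at ht hpow ⊢
    have hreflect : F (-1) * (-t) ^ μ ≤ F (-(-t)) :=
      mul_rpow_le_of_mul_le_deriv_mul (F := fun x => F (-x)) (F' := fun x => -F' (-x))
        (fun x _ => by simpa [Function.comp_def] using (hF (-x)).comp x (hasDerivAt_neg' x))
        (fun x hx => by simpa using hAR (-x) (neg_ne_zero.2 hx.ne')) ht
    rw [neg_neg] at hreflect
    exact (mul_le_mul_of_nonneg_right (min_le_right _ _) hpow).trans hreflect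

end AmbrosettiRabinowitz

theorem stmt1 (f : ℝ → ℝ) (hf : Continuous f)
    (F : ℝ → ℝ) (hF : ∀ u : ℝ, F u = ∫ s in (0:ℝ)..u, f s)
    (μ : ℝ) (hμ : 2 < μ)
    (hAR : ∀ u : ℝ, u ≠ 0 → (1 / μ) * (f u * u) ≥ F u ∧ F u > 0) :
    ∃ c₁ > (0:ℝ), ∃ c₂ > (0:ℝ), ∀ t : ℝ, F t ≥ c₁ * |t| ^ μ - c₂ * |t| ^ (2:ℝ) := by
  have hμ0 : 0 < μ := by linarith
  have hderiv : ∀ x, HasDerivAt F (f x) x := by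
    rw [funext hF]; exact fun x => (hf.integral_hasStrictDerivAt 0 x).hasDerivAt
  have hARμ : ∀ u, u ≠ 0 → μ * F u ≤ f u * u := fun u hu => by
    have h := (hAR u hu).1
    rwa [ge_iff_le, one_div, inv_mul_eq_div, le_div_iff₀' hμ0] at h
  have hFnonneg : ∀ t, 0 ≤ F t := fun t => by
    rcases eq_or_ne t 0 with rfl | ht
    · simp [hF]
    · exact (hAR t ht).2.le
  set c := min (F 1) (F (-1))
  have hc : 0 < c := lt_min (hAR 1 one_ne_zero).2 (hAR (-1) (by norm_num)).2
  refine ⟨c, hc, c, hc, fun t => ?_⟩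
  have hsq : 0 ≤ c * |t| ^ (2:ℝ) := mul_nonneg hc.le (Real.rpow_nonneg (abs_nonneg t) _)
  rcases le_or_gt |t| 1 with hle | hgt
  · have : |t| ^ μ ≤ |t| ^ (2:ℝ) :=
      Real.rpow_le_rpow_of_exponent_ge' (abs_nonneg t) hle (by norm_num) hμ.le
    nlinarith [hFnonneg t]
  · linarith [min_mul_abs_rpow_le_of_mul_le_deriv_mul hderiv hARμ hgt.le]
end

section
/- Let μ > 2 and define V : ℝ³ → ℝ by V(x) = ln(1+|x|²) − |x|²/(1+|x|²) + (μ+2)/(μ−2). Then V is continuous and bounded below by a positive constant, V(x) → ∞ as |x| → ∞, and ((μ−2)/2) V(x) − (∇V(x), x) ≥ 0 for all x ∈ ℝ³. -/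
open RealInnerProductSpace Filter

/-!
Write `V x = φ (‖x‖²) + C` with `φ s = log (1 + s) - s / (1 + s)` and `C = (μ + 2) / (μ - 2)`.
Since `1 - 1 / (1 + s) ≤ log (1 + s)`, `φ ≥ 0` on `[0, ∞)`, so `V ≥ C > 0`, and `φ ≥ log (1 + s) - 1`
grows without bound. By the chain rule `∇V x = 2 φ'(‖x‖²) x` with `φ' s = s / (1 + s)²`, so
`⟪∇V x, x⟫ = 2 (s / (1 + s))² ≤ 2` for `s = ‖x‖²`, whereas `((μ - 2) / 2) V x ≥ ((μ - 2) / 2) C = (μ + 2) / 2 > 2`.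
-/

noncomputable def potentialProfile (s : ℝ) : ℝ := Real.log (1 + s) - s / (1 + s)

lemma potentialProfile_nonneg {s : ℝ} (hs : 0 ≤ s) : 0 ≤ potentialProfile s := by
  have h := Real.one_sub_inv_le_log_of_pos (by linarith : 0 < 1 + s)
  have hfrac : 1 - (1 + s)⁻¹ = s / (1 + s) := by field_simp; ring
  unfold potentialProfile
  linarith

lemma hasDerivAt_potentialProfile {s : ℝ} (hs : 0 < 1 + s) :
    HasDerivAt potentialProfile (s / (1 + s) ^ 2) s := by
  have hlog : HasDerivAt (fun s => Real.log (1 + s)) (1 / (1 + s)) s := by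
    simpa using ((hasDerivAt_id s).const_add 1).log hs.ne'
  have hfrac : HasDerivAt (fun s => s / (1 + s)) (1 / (1 + s) ^ 2) s :=
    ((hasDerivAt_id s).div ((hasDerivAt_id s).const_add 1) hs.ne').congr_deriv
      (by simp only [id]; ring)
  refine (hlog.sub hfrac).congr_deriv ?_
  field_simp
  ring

lemma tendsto_potentialProfile_atTop : Tendsto potentialProfile atTop atTop := by
  have hlog : Tendsto (fun s => Real.log (1 + s) - 1) atTop atTop :=
    tendsto_atTop_add_const_right _ _
      (Real.tendsto_log_atTop.comp (tendsto_atTop_add_const_left _ _ tendsto_id))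
  refine tendsto_atTop_mono' _ ?_ hlog
  filter_upwards [eventually_ge_atTop 0] with s hs
  have : s / (1 + s) ≤ 1 := (div_le_one (by linarith)).2 (by linarith)
  unfold potentialProfile
  linarith

lemma tendsto_potentialProfile_sq_add_const_atTop (C : ℝ) :
    Tendsto (fun r : ℝ => potentialProfile (r ^ 2) + C) atTop atTop :=
  tendsto_atTop_add_const_right _ C
    (tendsto_potentialProfile_atTop.comp (tendsto_pow_atTop two_ne_zero))

lemma HasDerivAt.hasGradientAt_comp_norm_sq {E : Type*} [NormedAddCommGroup E]
    [InnerProductSpace ℝ E] [CompleteSpace E] {f : ℝ → ℝ} {f' : ℝ} {x : E}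
    (hf : HasDerivAt f f' (‖x‖ ^ 2)) :
    HasGradientAt (fun y => f (‖y‖ ^ 2)) ((2 * f') • x) x := by
  have hnorm : HasFDerivAt (fun y : E => ‖y‖ ^ 2) (2 • innerSL ℝ x) x := by
    simpa using (hasFDerivAt_id x).norm_sq
  refine (hf.comp_hasFDerivAt x hnorm).congr_fderiv ?_
  ext y
  simp only [smul_apply, coe_innerSL_apply, nsmul_eq_mul, Nat.cast_ofNat,
    smul_eq_mul, map_smul, InnerProductSpace.toDual_apply_apply]
  ring

section Potential

variable {E : Type*} [NormedAddCommGroup E]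

noncomputable def potential (C : ℝ) (x : E) : ℝ := potentialProfile (‖x‖ ^ 2) + C

lemma le_potential (C : ℝ) (x : E) : C ≤ potential C x :=
  le_add_of_nonneg_left (potentialProfile_nonneg (by positivity))

variable [InnerProductSpace ℝ E] [CompleteSpace E]

lemma hasGradientAt_potential (C : ℝ) (x : E) :
    HasGradientAt (potential C) ((2 * (‖x‖ ^ 2 / (1 + ‖x‖ ^ 2) ^ 2)) • x) x :=
  ((hasDerivAt_potentialProfile (by positivity)).add_const C).hasGradientAt_comp_norm_sq

lemma continuous_potential (C : ℝ) : Continuous (potential (E := E) C) :=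
  continuous_iff_continuousAt.2 fun x => (hasGradientAt_potential C x).differentiableAt.continuousAt

lemma inner_gradient_potential_self_le (C : ℝ) (x : E) : ⟪gradient (potential C) x, x⟫ ≤ 2 := by
  rw [(hasGradientAt_potential C x).gradient, real_inner_smul_left, real_inner_self_eq_norm_sq]
  set s := ‖x‖ ^ 2
  have hs : 0 ≤ s := by positivity
  have : s / (1 + s) ^ 2 * s ≤ 1 := by
    rw [div_mul_eq_mul_div, div_le_one (by positivity)]
    nlinarith
  linarith

end Potential

theorem stmt3 (μ : ℝ) (hμ : 2 < μ)
    (V : EuclideanSpace ℝ (Fin 3) → ℝ)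
    (hV : ∀ x, V x = Real.log (1 + ‖x‖ ^ 2) - ‖x‖ ^ 2 / (1 + ‖x‖ ^ 2) + (μ + 2) / (μ - 2)) :
    Continuous V ∧
    (∃ c : ℝ, 0 < c ∧ ∀ x, c ≤ V x) ∧
    (∀ M : ℝ, ∃ R : ℝ, ∀ x : EuclideanSpace ℝ (Fin 3), R ≤ ‖x‖ → M ≤ V x) ∧
    (∀ x : EuclideanSpace ℝ (Fin 3),
      0 ≤ ((μ - 2) / 2) * V x - ⟪gradient V x, x⟫) := by
  obtain rfl : V = potential ((μ + 2) / (μ - 2)) := funext hV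
  have hμ2 : 0 < μ - 2 := by linarith
  refine ⟨continuous_potential _, ⟨_, by positivity, le_potential _⟩, fun M => ?_, fun x => ?_⟩
  · obtain ⟨R, hR⟩ := tendsto_atTop_atTop.1 (tendsto_potentialProfile_sq_add_const_atTop _) M
    exact ⟨R, fun x hx => hR ‖x‖ hx⟩
  · have hscaled : (μ - 2) / 2 * ((μ + 2) / (μ - 2)) = (μ + 2) / 2 := by field_simp
    refine sub_nonneg.2 ?_
    calc ⟪gradient (potential _) x, x⟫ ≤ 2 := inner_gradient_potential_self_le _ x
      _ ≤ (μ - 2) / 2 * ((μ + 2) / (μ - 2)) := by rw [hscaled]; linarith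
      _ ≤ _ := by gcongr; exact le_potential _ x
end

section
/- Let E be a Hilbert space, I ∈ C¹(E, ℝ), and A : E → E a map such that for each u ∈ E, v = A(u) satisfies (u − v, φ)_E + b K(u) ∫∇(u−v)·∇φ = ⟨I'(u), φ⟩ for all φ ∈ E, where K(u) = ∫|∇u|² ≤ (1/a)‖u‖_E². Then ⟨I'(u), u − A(u)⟩ ≥ ‖u − A(u)‖_E² for all u ∈ E, and ‖I'(u)‖ ≤ ‖u − A(u)‖_E (1 + (b/a²)‖u‖_E²). -/
/-!
Write `w = u - A u`. Testing the defining identity of `A u` with `φ = w` gives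
`DI u w = ‖w‖² + b B(u, u) B(w, w) ≥ ‖w‖²`. For general `φ`, Cauchy–Schwarz for the positive
semidefinite form `B` together with `B x x ≤ ‖x‖² / a` gives `|B(w, φ)| ≤ ‖w‖ ‖φ‖ / a`, and
`B(u, u) ≤ ‖u‖² / a` then bounds `|DI u φ|` by `‖w‖ (1 + b ‖u‖² / a²) ‖φ‖`.
-/

open RealInnerProductSpace

namespace LinearMap.BilinForm

variable {E : Type*}

lemma abs_apply_le_of_apply_self_le [SeminormedAddCommGroup E] [Module ℝ E]
    (B : LinearMap.BilinForm ℝ E) (hs : ∀ x, 0 ≤ B x x) (hB : LinearMap.IsSymm B)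
    {c : ℝ} (hc0 : 0 ≤ c)
    (hc : ∀ x, B x x ≤ c * ‖x‖ ^ 2) (x y : E) :
    |B x y| ≤ c * ‖x‖ * ‖y‖ := by
  refine abs_le_of_sq_le_sq ?_ (by positivity)
  calc B x y ^ 2 ≤ B x x * B y y := B.apply_sq_le_of_symm hs hB x y
    _ ≤ (c * ‖x‖ ^ 2) * (c * ‖y‖ ^ 2) :=
      mul_le_mul (hc x) (hc y) (hs y) ((hs x).trans (hc x))
    _ = (c * ‖x‖ * ‖y‖) ^ 2 := by ring

lemma abs_inner_add_mul_apply_le [NormedAddCommGroup E] [InnerProductSpace ℝ E]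
    (B : LinearMap.BilinForm ℝ E) (hs : ∀ x, 0 ≤ B x x) (hB : LinearMap.IsSymm B)
    {c k : ℝ} (hc0 : 0 ≤ c)
    (hc : ∀ x, B x x ≤ c * ‖x‖ ^ 2) (hk : 0 ≤ k) (w φ : E) :
    |⟪w, φ⟫ + k * B w φ| ≤ ‖w‖ * (1 + k * c) * ‖φ‖ := by
  calc |⟪w, φ⟫ + k * B w φ| ≤ |⟪w, φ⟫| + k * |B w φ| := by
        simpa only [abs_mul, abs_of_nonneg hk] using abs_add_le ⟪w, φ⟫ (k * B w φ)
    _ ≤ ‖w‖ * ‖φ‖ + k * (c * ‖w‖ * ‖φ‖) := by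
        gcongr
        exacts [abs_real_inner_le_norm w φ, B.abs_apply_le_of_apply_self_le hs hB hc0 hc w φ]
    _ = ‖w‖ * (1 + k * c) * ‖φ‖ := by ring

end LinearMap.BilinForm

theorem stmt8_general {E : Type*} [NormedAddCommGroup E] [InnerProductSpace ℝ E]
    (a b : ℝ) (ha : 0 < a) (hb : 0 < b)
    (B : E →ₗ[ℝ] E →ₗ[ℝ] ℝ)
    (hBsymm : ∀ u v : E, B u v = B v u)
    (hBpos : ∀ u : E, 0 ≤ B u u)
    (hBbound : ∀ u : E, B u u ≤ (1 / a) * ‖u‖ ^ 2)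
    (DI : E → E →L[ℝ] ℝ) (A : E → E)
    (hA : ∀ u φ : E, ⟪u - A u, φ⟫ + b * (B u u) * (B (u - A u) φ) = DI u φ) :
    (∀ u : E, ‖u - A u‖ ^ 2 ≤ DI u (u - A u)) ∧
    (∀ u : E, ‖DI u‖ ≤ ‖u - A u‖ * (1 + (b / a ^ 2) * ‖u‖ ^ 2)) := by
  refine ⟨fun u => ?_, fun u => ?_⟩
  · rw [← hA, real_inner_self_eq_norm_sq]
    have := mul_nonneg (mul_nonneg hb.le (hBpos u)) (hBpos (u - A u))
    linarith
  · have hB : LinearMap.IsSymm B := ⟨fun x y => hBsymm x y⟩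
    have hkc : b * B u u * (1 / a) ≤ b / a ^ 2 * ‖u‖ ^ 2 := by
      calc b * B u u * (1 / a) ≤ b * ((1 / a) * ‖u‖ ^ 2) * (1 / a) := by
            gcongr; exact hBbound u
        _ = b / a ^ 2 * ‖u‖ ^ 2 := by field_simp
    refine ContinuousLinearMap.opNorm_le_bound _ (by positivity) fun φ => ?_
    rw [← hA, Real.norm_eq_abs]
    calc _ ≤ ‖u - A u‖ * (1 + b * B u u * (1 / a)) * ‖φ‖ :=
          LinearMap.BilinForm.abs_inner_add_mul_apply_le B hBpos hB (by positivity) hBbound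
            (mul_nonneg hb.le (hBpos u)) _ _
      _ ≤ ‖u - A u‖ * (1 + b / a ^ 2 * ‖u‖ ^ 2) * ‖φ‖ := by gcongr

theorem stmt8 {E : Type*} [NormedAddCommGroup E] [InnerProductSpace ℝ E] [CompleteSpace E]
    (a b : ℝ) (ha : 0 < a) (hb : 0 < b)
    (B : E →ₗ[ℝ] E →ₗ[ℝ] ℝ)
    (hBsymm : ∀ u v : E, B u v = B v u)
    (hBpos : ∀ u : E, 0 ≤ B u u)
    (hBbound : ∀ u : E, B u u ≤ (1 / a) * ‖u‖ ^ 2)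
    (DI : E → E →L[ℝ] ℝ) (A : E → E)
    (hA : ∀ u φ : E, ⟪u - A u, φ⟫ + b * (B u u) * (B (u - A u) φ) = DI u φ) :
    (∀ u : E, ‖u - A u‖ ^ 2 ≤ DI u (u - A u)) ∧
    (∀ u : E, ‖DI u‖ ≤ ‖u - A u‖ * (1 + (b / a ^ 2) * ‖u‖ ^ 2)) :=
  stmt8_general a b ha hb B hBsymm hBpos hBbound DI A hA
end

section
/- Suppose nonnegative reals x (= ‖u_n‖_E), t₂ (= ‖u_n‖_2), t_p (= ‖u_n‖_p), t_r (= ‖u_n‖_r) satisfy t₂² + t_r^r ≤ C(λ) t_p^p with 2 < p < r, and the interpolation inequality t_p ≤ t₂^θ t_r^{1−θ} where θ ∈ (0,1) is defined by 1/p = θ/2 + (1−θ)/r. Then there exist constants C₁(λ), C₂(λ) > 0 depending only on C(λ), p, r such that C₁(λ) t₂^{2/r} ≤ t_r ≤ C₂(λ) t₂^{2/r}, and consequently t_p^p ≤ C₃(λ) t₂² for some C₃(λ) > 0. -/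
/-!
Raising the interpolation inequality to the power p gives t_p^p ≤ t₂^a t_r^b with a = θp,
b = (1-θ)p and a/2 + b/r = 1, so t₂² + t_r^r ≤ C t₂^a t_r^b is invariant under the scaling
t₂ ↦ λ t₂, t_r ↦ λ^(2/r) t_r. Writing t_r = u t₂^(2/r) it becomes 1 + u^r ≤ C u^b, which pins u
between C^(-1/b) (from 1 ≤ C u^b) and C^(1/(r-b)) (from u^r ≤ C u^b, as b < r).
-/

open Real

theorem bounds_of_one_add_rpow_le_mul_rpow {u K b r : ℝ} (hu : 0 ≤ u) (hb : 0 < b)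
    (hbr : b < r) (h : 1 + u ^ r ≤ K * u ^ b) : K⁻¹ ^ b⁻¹ ≤ u ∧ u ≤ K ^ (r - b)⁻¹ := by
  have h_one : 1 ≤ K * u ^ b := by linarith [rpow_nonneg hu r]
  have hu0 : 0 < u := by
    refine hu.lt_of_ne' fun hu0 => ?_
    rw [hu0, zero_rpow hb.ne', mul_zero] at h_one
    linarith
  have hK : 0 < K := pos_of_mul_pos_left (by linarith) (rpow_nonneg hu b)
  constructor
  · rw [rpow_inv_le_iff_of_pos (by positivity) hu hb, inv_le_iff_one_le_mul₀' hK]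
    exact h_one
  · rw [le_rpow_inv_iff_of_pos hu hK.le (by linarith), rpow_sub hu0,
      div_le_iff₀ (rpow_pos_of_pos hu0 b)]
    linarith

theorem rpow_le_mul_rpow_of_le_mul {z x y α β p : ℝ} (hz : 0 ≤ z) (hx : 0 ≤ x) (hy : 0 ≤ y)
    (hp : 0 ≤ p) (h : z ≤ x ^ α * y ^ β) : z ^ p ≤ x ^ (α * p) * y ^ (β * p) := by
  calc z ^ p ≤ (x ^ α * y ^ β) ^ p := rpow_le_rpow hz h hp
    _ = x ^ (α * p) * y ^ (β * p) := by
      rw [mul_rpow (rpow_nonneg hx _) (rpow_nonneg hy _), ← rpow_mul hx, ← rpow_mul hy]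

theorem bounds_of_rpow_add_rpow_le_mul {x y K a b r s : ℝ} (hx : 0 ≤ x) (hy : 0 ≤ y)
    (ha : 0 < a) (hb : 0 < b) (hr : 0 < r) (hs : 0 < s) (hab : a / s + b / r = 1)
    (h : x ^ s + y ^ r ≤ K * (x ^ a * y ^ b)) :
    K⁻¹ ^ b⁻¹ * x ^ (s / r) ≤ y ∧ y ≤ K ^ (r - b)⁻¹ * x ^ (s / r) ∧
      x ^ a * y ^ b ≤ (K ^ (r - b)⁻¹) ^ b * x ^ s := by
  rcases hx.eq_or_lt with rfl | hx
  · have hy0 : y = 0 := by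
      rw [zero_rpow ha.ne', zero_mul, mul_zero, zero_rpow hs.ne', zero_add] at h
      exact (rpow_eq_zero hy hr.ne').mp (h.antisymm (rpow_nonneg hy r))
    simp [hy0, zero_rpow ha.ne', zero_rpow hs.ne', zero_rpow (div_pos hs hr).ne']
  set u := y / x ^ (s / r)
  have hxr : 0 < x ^ (s / r) := rpow_pos_of_pos hx _
  have hu : 0 ≤ u := div_nonneg hy hxr.le
  have hyu : y = u * x ^ (s / r) := (div_mul_cancel₀ y hxr.ne').symm
  have hyr : y ^ r = u ^ r * x ^ s := by
    rw [hyu, mul_rpow hu hxr.le, ← rpow_mul hx.le, div_mul_cancel₀ s hr.ne']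
  have hmix : x ^ a * y ^ b = u ^ b * x ^ s := by
    rw [hyu, mul_rpow hu hxr.le, ← rpow_mul hx.le, mul_left_comm, ← rpow_add hx]
    congr 2
    field_simp at hab ⊢
    linarith
  have hxs : 0 < x ^ s := rpow_pos_of_pos hx s
  have hbr : b < r := by
    have : b / r < 1 := by linarith [div_pos ha hs]
    rwa [div_lt_one hr] at this
  have hu_bound : 1 + u ^ r ≤ K * u ^ b := by
    rw [hyr, hmix] at h
    refine le_of_mul_le_mul_right ?_ hxs
    linarith
  obtain ⟨hlo, hhi⟩ := bounds_of_one_add_rpow_le_mul_rpow hu hb hbr hu_bound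
  refine ⟨?_, ?_, ?_⟩
  · rw [hyu]; exact mul_le_mul_of_nonneg_right hlo hxr.le
  · rw [hyu]; exact mul_le_mul_of_nonneg_right hhi hxr.le
  · rw [hmix]; exact mul_le_mul_of_nonneg_right (rpow_le_rpow hu hhi hb.le) hxs.le

theorem stmt13 (C p r θ : ℝ) (hC : 0 < C) (hp : 2 < p) (hpr : p < r)
    (hθ0 : 0 < θ) (hθ1 : θ < 1)
    (hθ : 1 / p = θ / 2 + (1 - θ) / r) :
    ∃ C₁ > (0:ℝ), ∃ C₂ > (0:ℝ), ∃ C₃ > (0:ℝ),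
      ∀ t₂ tp tr : ℝ, 0 ≤ t₂ → 0 ≤ tp → 0 ≤ tr →
        t₂ ^ (2:ℝ) + tr ^ r ≤ C * tp ^ p →
        tp ≤ t₂ ^ θ * tr ^ (1 - θ) →
        (C₁ * t₂ ^ (2 / r) ≤ tr ∧ tr ≤ C₂ * t₂ ^ (2 / r) ∧ tp ^ p ≤ C₃ * t₂ ^ (2:ℝ)) := by
  have hp0 : 0 < p := by linarith
  have hr0 : 0 < r := by linarith
  have hab : θ * p / 2 + (1 - θ) * p / r = 1 := by
    field_simp at hθ ⊢
    linarith
  refine ⟨C⁻¹ ^ ((1 - θ) * p)⁻¹, by positivity, C ^ (r - (1 - θ) * p)⁻¹, by positivity,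
    (C ^ (r - (1 - θ) * p)⁻¹) ^ ((1 - θ) * p), by positivity, ?_⟩
  intro t₂ tp tr ht₂ htp htr hC_bound hinterp
  have hpow := rpow_le_mul_rpow_of_le_mul htp ht₂ htr hp0.le hinterp
  obtain ⟨hlo, hhi, hmix⟩ := bounds_of_rpow_add_rpow_le_mul ht₂ htr (mul_pos hθ0 hp0)
    (mul_pos (by linarith) hp0) hr0 two_pos hab
    (hC_bound.trans (mul_le_mul_of_nonneg_left hpow hC.le))
  exact ⟨hlo, hhi, hpow.trans hmix⟩
end
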